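/- Let $c \in (0, 1/2)$, $\alpha \in (0,1]$, $d \geq 1$. Define a sequence of intervals $[a_k, b_k]$ and depths $\rho_k$ recursively: $a_1 = 0$, $b_1 = 1$, $\rho_1 = 0$, and at each step $k$ either (i) $a_{k+1} = a_k - (b_k - a_k)/2$, $b_{k+1} = b_k - (b_k - a_k)/2$, $\rho_{k+1} = \rho_k$, or (ii) $a_{k+1} = (a_k+b_k)/2 - c \cdot 2^{-\alpha(\rho_k/d + 1) + 1}$, $b_{k+1} = b_k$, $\rho_{k+1} = \rho_k + d$. Then for all $k \geq 1$, $|b_k - a_k| \leq (1 + 2c\rho_k/d) \cdot 2^{-\alpha \rho_k / d}$. -/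
import Mathlib


/-- Interval-length contraction lemma for the thresholded binary search in GP-ThreDS. -/
theorem stmt_0 (c α : ℝ) (hc : c ∈ Set.Ioo (0:ℝ) (1/2)) (hα : α ∈ Set.Ioc (0:ℝ) 1)
    (d : ℕ) (hd : 1 ≤ d) (a b : ℕ → ℝ) (ρ : ℕ → ℕ)
    (ha1 : a 1 = 0) (hb1 : b 1 = 1) (hρ1 : ρ 1 = 0)
    (hrec : ∀ k, 1 ≤ k →
      (a (k+1) = a k - (b k - a k)/2 ∧ b (k+1) = b k - (b k - a k)/2 ∧ ρ (k+1) = ρ k) ∨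
      (a (k+1) = (a k + b k)/2 - c * (2:ℝ) ^ (-α * ((ρ k : ℝ)/(d:ℝ) + 1) + 1) ∧
        b (k+1) = b k ∧ ρ (k+1) = ρ k + d)) :
    ∀ k, 1 ≤ k →
      |b k - a k| ≤ (1 + 2*c*(ρ k : ℝ)/(d:ℝ)) * (2:ℝ) ^ (-(α * (ρ k : ℝ)/(d:ℝ))) := by
  obtain ⟨hc0, hc2⟩ := hc
  obtain ⟨hα0, hα1⟩ := hα
  have hdpos : (0:ℝ) < (d:ℝ) := by exact_mod_cast hd
  suffices H : ∀ k, 1 ≤ k → 0 ≤ b k - a k ∧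
      b k - a k ≤ (1 + 2*c*(ρ k : ℝ)/(d:ℝ)) * (2:ℝ) ^ (-(α * (ρ k : ℝ)/(d:ℝ))) by
    intro k hk
    obtain ⟨h1, h2⟩ := H k hk
    rwa [abs_of_nonneg h1]
  intro k hk
  induction k, hk using Nat.le_induction with
  | base => simp [ha1, hb1, hρ1]
  | succ n hn ih =>
    obtain ⟨ih0, ih1⟩ := ih
    rcases hrec n hn with ⟨ha, hb, hρ⟩ | ⟨ha, hb, hρ⟩
    · rw [ha, hb, hρ]
      constructor
      · linarith
      · linarith
    · set r : ℝ := (ρ n : ℝ)/(d:ℝ) with hr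
      have hr0 : 0 ≤ r := by positivity
      have hρd : ((ρ (n+1) : ℝ)/(d:ℝ)) = r + 1 := by
        rw [hρ, hr]; push_cast; field_simp
      have hE2pos : (0:ℝ) < (2:ℝ) ^ (-α*(r+1)) := Real.rpow_pos_of_pos two_pos _
      have hE1pos : (0:ℝ) < (2:ℝ) ^ (-(α*r)) := Real.rpow_pos_of_pos two_pos _
      have hexp : (2:ℝ) ^ (-α * (r + 1) + 1) = 2 * (2:ℝ) ^ (-α*(r+1)) := by
        rw [Real.rpow_add two_pos, Real.rpow_one]; ring
      have hhalf : (2:ℝ) ^ (-(α*r)) / 2 ≤ (2:ℝ) ^ (-α*(r+1)) := by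
        have : (2:ℝ) ^ (-(α*r)) / 2 = (2:ℝ) ^ (-(α*r) - 1) := by
          rw [Real.rpow_sub two_pos, Real.rpow_one]
        rw [this]
        exact Real.rpow_le_rpow_of_exponent_le one_le_two (by nlinarith)
      have hdiff : b (n+1) - a (n+1) = (b n - a n)/2 + 2*c*(2:ℝ) ^ (-α*(r+1)) := by
        rw [ha, hb, hexp]; ring
      have hcoef : 0 ≤ 1 + 2*c*(ρ n : ℝ)/(d:ℝ) := by
        rw [show 2*c*(ρ n : ℝ)/(d:ℝ) = 2*c*r by rw [hr]; ring]
        nlinarith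
      have key : b (n+1) - a (n+1) ≤ (1 + 2*c*(r+1)) * (2:ℝ) ^ (-α*(r+1)) := by
        rw [hdiff]
        have h1 : (b n - a n)/2 ≤ (1 + 2*c*(ρ n : ℝ)/(d:ℝ)) * ((2:ℝ) ^ (-(α*r)) / 2) := by
          have := ih1
          rw [show -(α * (ρ n : ℝ)/(d:ℝ)) = -(α*r) by rw [hr]; ring] at this
          nlinarith
        have h2 : (1 + 2*c*(ρ n : ℝ)/(d:ℝ)) * ((2:ℝ) ^ (-(α*r)) / 2)
            ≤ (1 + 2*c*r) * (2:ℝ) ^ (-α*(r+1)) := by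
          rw [show 2*c*(ρ n : ℝ)/(d:ℝ) = 2*c*r by rw [hr]; ring]
          have h0 : 0 ≤ 1 + 2*c*r := by nlinarith
          exact mul_le_mul_of_nonneg_left hhalf h0
        nlinarith
      constructor
      · rw [hdiff]; positivity
      · calc b (n+1) - a (n+1) ≤ (1 + 2*c*(r+1)) * (2:ℝ) ^ (-α*(r+1)) := key
          _ = (1 + 2*c*((ρ (n+1) : ℝ)/(d:ℝ))) * (2:ℝ) ^ (-(α*((ρ (n+1) : ℝ)/(d:ℝ)))) := by
              rw [hρd]; ring_nf
          _ = (1 + 2*c*(ρ (n+1) : ℝ)/(d:ℝ)) * (2:ℝ) ^ (-(α * (ρ (n+1) : ℝ)/(d:ℝ))) := by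
              ring_nf
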